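/- Under L-Lipschitz gradient, the sufficient direction condition ⟨∇f(w^t), E[g^t]⟩ ≥ σ‖∇f(w^t)‖², bounded second moment E‖g^t‖² ≤ M, and positive stepsizes γ_t, the iterates w^{t+1} = w^t − γ_t g^t satisfy, with Γ_T = Σ_{t=0}^{T−1} γ_t: (1/Γ_T) Σ_{t=0}^{T−1} γ_t E‖∇f(w^t)‖² ≤ (f(w^0) − f(w*))/(σ Γ_T) + (L M / (2σ)) · (Σ_{t=0}^{T−1} γ_t²)/Γ_T. -/

import Mathlib

open MeasureTheory RealInnerProductSpace Finset

lemma descent_lemma {d : ℕ} (f : EuclideanSpace ℝ (Fin d) → ℝ)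
    (f' : EuclideanSpace ℝ (Fin d) → EuclideanSpace ℝ (Fin d)) (L : ℝ) (hL : 0 < L)
    (hgrad : ∀ x, HasGradientAt f (f' x) x)
    (hlip : ∀ x y, ‖f' x - f' y‖ ≤ L * ‖x - y‖) (x y : EuclideanSpace ℝ (Fin d)) :
    f y ≤ f x + ⟪f' x, y - x⟫ + L / 2 * ‖y - x‖ ^ 2 := by
  set v := y - x with hv
  have hcont : Continuous f' := by
    have : LipschitzWith (Real.toNNReal L) f' := by
      apply LipschitzWith.of_dist_le_mul
      intro a b
      rw [dist_eq_norm, dist_eq_norm]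
      simpa [Real.coe_toNNReal L hL.le] using hlip a b
    exact this.continuous
  have hderiv : ∀ s : ℝ, HasDerivAt (fun s : ℝ => f (x + s • v)) ⟪f' (x + s • v), v⟫ s := by
    intro s
    have h1 : HasDerivAt (fun s : ℝ => x + s • v) v s := by
      simpa using ((hasDerivAt_id s).smul_const v).const_add x
    have h2 := (hgrad (x + s • v)).hasFDerivAt.comp_hasDerivAt s h1
    simpa [InnerProductSpace.toDual_apply_apply, Function.comp_def] using h2
  have hcd : Continuous (fun s : ℝ => ⟪f' (x + s • v), v⟫) :=
    ((hcont.comp (continuous_const.add (continuous_id.smul continuous_const))).inner continuous_const)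
  have hftc : f y - f x = ∫ s in (0:ℝ)..1, ⟪f' (x + s • v), v⟫ := by
    have := intervalIntegral.integral_eq_sub_of_hasDerivAt
      (f := fun s : ℝ => f (x + s • v)) (fun s _ => hderiv s)
      (hcd.intervalIntegrable 0 1)
    simp only [one_smul, zero_smul, add_zero] at this
    have hxy : x + v = y := by rw [hv]; abel
    rw [← hxy]
    exact this.symm
  have hbound : ∫ s in (0:ℝ)..1, ⟪f' (x + s • v), v⟫ ≤ ⟪f' x, v⟫ + L / 2 * ‖v‖ ^ 2 := by
    have hmono : ∫ s in (0:ℝ)..1, ⟪f' (x + s • v), v⟫ ≤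
        ∫ s in (0:ℝ)..1, (⟪f' x, v⟫ + L * s * ‖v‖ ^ 2) := by
      apply intervalIntegral.integral_mono_on (by norm_num)
        (hcd.intervalIntegrable 0 1)
        ((by fun_prop : Continuous (fun s : ℝ => ⟪f' x, v⟫ + L * s * ‖v‖ ^ 2)).intervalIntegrable 0 1)
      intro s hs
      have h1 : ⟪f' (x + s • v) - f' x, v⟫ ≤ ‖f' (x + s • v) - f' x‖ * ‖v‖ :=
        real_inner_le_norm _ _
      have h2 : ‖f' (x + s • v) - f' x‖ ≤ L * (s * ‖v‖) := by
        have := hlip (x + s • v) x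
        simpa [norm_smul, abs_of_nonneg hs.1] using this
      have h3 : ‖f' (x + s • v) - f' x‖ * ‖v‖ ≤ L * (s * ‖v‖) * ‖v‖ :=
        mul_le_mul_of_nonneg_right h2 (norm_nonneg _)
      have h4 : ⟪f' (x + s • v), v⟫ - ⟪f' x, v⟫ = ⟪f' (x + s • v) - f' x, v⟫ := by
        rw [inner_sub_left]
      nlinarith [pow_two_nonneg ‖v‖]
    have hval : ∫ s in (0:ℝ)..1, (⟪f' x, v⟫ + L * s * ‖v‖ ^ 2)
        = ⟪f' x, v⟫ + L / 2 * ‖v‖ ^ 2 := by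
      rw [intervalIntegral.integral_add (intervalIntegrable_const)
        ((by fun_prop : Continuous (fun s : ℝ => L * s * ‖v‖ ^ 2)).intervalIntegrable 0 1)]
      simp only [intervalIntegral.integral_const, smul_eq_mul]
      have : ∫ s in (0:ℝ)..1, L * s * ‖v‖ ^ 2 = L / 2 * ‖v‖ ^ 2 := by
        have : (fun s : ℝ => L * s * ‖v‖ ^ 2) = fun s : ℝ => (L * ‖v‖ ^ 2) * s := by
          funext s; ring
        rw [this, intervalIntegral.integral_const_mul, integral_id]
        ring
      rw [this]; ring
    linarith
  linarith

/-- Theorem 2: diminishing-stepsize bound. With `Γ_T = Σ_{t<T} γ_t`,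
`(1/Γ_T) Σ_{t<T} γ_t E‖∇f(w^t)‖² ≤ (f(w^0) - f(w^*))/(σ Γ_T) + (L M/(2σ)) (Σ_{t<T} γ_t²)/Γ_T`. -/
theorem features_replay_diminishing_stepsize
    {d : ℕ} {Ω : Type*} [MeasureSpace Ω] {μ : Measure Ω} [IsProbabilityMeasure μ]
    (f : EuclideanSpace ℝ (Fin d) → ℝ) (f' : EuclideanSpace ℝ (Fin d) → EuclideanSpace ℝ (Fin d))
    (L σ M : ℝ) (γ : ℕ → ℝ) (hL : 0 < L) (hσ : 0 < σ) (hM : 0 ≤ M) (hγ : ∀ t, 0 < γ t)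
    (hgrad : ∀ x, HasGradientAt f (f' x) x)
    (hlip : ∀ x y, ‖f' x - f' y‖ ≤ L * ‖x - y‖)
    (w : ℕ → Ω → EuclideanSpace ℝ (Fin d)) (g : ℕ → Ω → EuclideanSpace ℝ (Fin d))
    (w0 : EuclideanSpace ℝ (Fin d)) (hw0 : ∀ ω, w 0 ω = w0)
    (hupdate : ∀ t ω, w (t + 1) ω = w t ω - γ t • g t ω)
    (wstar : EuclideanSpace ℝ (Fin d)) (hmin : ∀ x, f wstar ≤ f x)
    (hf_int : ∀ t, Integrable (fun ω => f (w t ω)) μ)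
    (hgrad_sq_int : ∀ t, Integrable (fun ω => ‖f' (w t ω)‖ ^ 2) μ)
    (hg_sq_int : ∀ t, Integrable (fun ω => ‖g t ω‖ ^ 2) μ)
    (hinner_int : ∀ t, Integrable (fun ω => ⟪f' (w t ω), g t ω⟫) μ)
    (hsuff : ∀ t, (∫ ω, ⟪f' (w t ω), g t ω⟫ ∂μ) ≥ σ * ∫ ω, ‖f' (w t ω)‖ ^ 2 ∂μ)
    (hbdd : ∀ t, ∫ ω, ‖g t ω‖ ^ 2 ∂μ ≤ M)
    (T : ℕ) (hT : 0 < T) :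
    (1 / (∑ t ∈ range T, γ t)) * ∑ t ∈ range T, γ t * ∫ ω, ‖f' (w t ω)‖ ^ 2 ∂μ ≤
      (f w0 - f wstar) / (σ * ∑ t ∈ range T, γ t) +
        (L * M / (2 * σ)) * ((∑ t ∈ range T, (γ t) ^ 2) / (∑ t ∈ range T, γ t)) := by
  set A : ℕ → ℝ := fun t => ∫ ω, f (w t ω) ∂μ with hA
  set G : ℕ → ℝ := fun t => ∫ ω, ‖f' (w t ω)‖ ^ 2 ∂μ with hG
  -- per-step expected descent
  have step : ∀ t, σ * (γ t * G t) ≤ A t - A (t + 1) + L / 2 * γ t ^ 2 * M := by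
    intro t
    have hpt : ∀ ω, f (w (t + 1) ω) ≤
        f (w t ω) - γ t * ⟪f' (w t ω), g t ω⟫ + L / 2 * γ t ^ 2 * ‖g t ω‖ ^ 2 := by
      intro ω
      have := descent_lemma f f' L hL hgrad hlip (w t ω) (w (t + 1) ω)
      have hdiff : w (t + 1) ω - w t ω = -(γ t • g t ω) := by rw [hupdate]; abel
      rw [hdiff] at this
      have h1 : ⟪f' (w t ω), -(γ t • g t ω)⟫ = -(γ t * ⟪f' (w t ω), g t ω⟫) := by
        rw [inner_neg_right, real_inner_smul_right]
      have h2 : ‖-(γ t • g t ω)‖ ^ 2 = γ t ^ 2 * ‖g t ω‖ ^ 2 := by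
        rw [norm_neg, norm_smul]
        rw [Real.norm_eq_abs, abs_of_pos (hγ t)]
        ring
      rw [h1, h2] at this
      linarith
    have hrhs_int : Integrable (fun ω =>
        f (w t ω) - γ t * ⟪f' (w t ω), g t ω⟫ + L / 2 * γ t ^ 2 * ‖g t ω‖ ^ 2) μ :=
      ((hf_int t).sub ((hinner_int t).const_mul (γ t))).add ((hg_sq_int t).const_mul _)
    have hint1 : Integrable (fun ω => f (w t ω) - γ t * ⟪f' (w t ω), g t ω⟫) μ :=
      (hf_int t).sub ((hinner_int t).const_mul (γ t))
    have hint2 : Integrable (fun ω => L / 2 * γ t ^ 2 * ‖g t ω‖ ^ 2) μ :=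
      (hg_sq_int t).const_mul _
    have hI := integral_mono (hf_int (t + 1)) hrhs_int (fun ω => hpt ω)
    rw [integral_add hint1 hint2, integral_sub (hf_int t) ((hinner_int t).const_mul (γ t)),
      integral_const_mul, integral_const_mul] at hI
    have h3 : γ t * (σ * G t) ≤ γ t * ∫ ω, ⟪f' (w t ω), g t ω⟫ ∂μ :=
      mul_le_mul_of_nonneg_left (hsuff t) (hγ t).le
    have h4 : L / 2 * γ t ^ 2 * ∫ ω, ‖g t ω‖ ^ 2 ∂μ ≤ L / 2 * γ t ^ 2 * M :=
      mul_le_mul_of_nonneg_left (hbdd t) (by positivity)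
    simp only [hA, hG] at *
    nlinarith
  -- sum up
  set Γ : ℝ := ∑ t ∈ range T, γ t with hΓdef
  set Q : ℝ := ∑ t ∈ range T, γ t ^ 2 with hQdef
  set S : ℝ := ∑ t ∈ range T, γ t * G t with hSdef
  have hΓ : 0 < Γ := Finset.sum_pos (fun t _ => hγ t) (nonempty_range_iff.mpr hT.ne')
  have hsum : σ * S ≤ A 0 - A T + L / 2 * M * Q := by
    have h1 : ∑ t ∈ range T, σ * (γ t * G t) ≤
        ∑ t ∈ range T, (A t - A (t + 1) + L / 2 * γ t ^ 2 * M) :=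
      Finset.sum_le_sum fun t _ => step t
    rw [← Finset.mul_sum] at h1
    rw [Finset.sum_add_distrib, Finset.sum_range_sub' A T] at h1
    have : ∑ t ∈ range T, L / 2 * γ t ^ 2 * M = L / 2 * M * Q := by
      rw [hQdef, Finset.mul_sum]
      exact Finset.sum_congr rfl fun t _ => by ring
    rw [this] at h1
    exact h1
  have hA0 : A 0 = f w0 := by
    simp only [hA]
    have : (fun ω => f (w 0 ω)) = fun _ : Ω => f w0 := by funext ω; rw [hw0]
    rw [this, integral_const]
    simp
  have hAT : f wstar ≤ A T := by
    have := integral_mono (integrable_const (f wstar)) (hf_int T) (fun ω => hmin (w T ω))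
    simpa using this
  have key : σ * S ≤ f w0 - f wstar + L / 2 * M * Q := by linarith
  have hS : S ≤ (f w0 - f wstar) / σ + L * M / (2 * σ) * Q := by
    have h1 : S ≤ (f w0 - f wstar + L / 2 * M * Q) / σ := by
      rw [le_div_iff₀ hσ]; linarith
    have h2 : (f w0 - f wstar + L / 2 * M * Q) / σ =
        (f w0 - f wstar) / σ + L * M / (2 * σ) * Q := by
      field_simp
    linarith
  calc (1 / Γ) * S = S / Γ := one_div_mul_eq_div Γ S
    _ ≤ ((f w0 - f wstar) / σ + L * M / (2 * σ) * Q) / Γ := by gcongr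
    _ = (f w0 - f wstar) / (σ * Γ) + L * M / (2 * σ) * (Q / Γ) := by
        rw [add_div, div_div, mul_div_assoc]
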